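/- Let R = F₂ + uF₂ be the ring F₂[u]/(u²) and let φ : Rⁿ → F₂^{2n} be the Gray map sending the vector with coordinates aᵢ + bᵢu (aᵢ, bᵢ ∈ F₂) to (b₁, …, bₙ, a₁ + b₁, …, aₙ + bₙ). If C ⊆ Rⁿ is a self-dual code, then its image φ(C), which is an F₂-subspace of F₂^{2n}, is a self-dual binary code of length 2n. -/

import Mathlib

/-- The dual of a code (submodule of `ι → K`) w.r.t. the Euclidean inner product. -/
def dualCode {K : Type*} [CommRing K] {ι : Type*} [Fintype ι]
    (C : Submodule K (ι → K)) : Submodule K (ι → K) where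
  carrier := {x | ∀ y ∈ C, ∑ i, x i * y i = 0}
  zero_mem' := by intro y _; simp
  add_mem' := by
    intro a b ha hb y hy
    simp only [Set.mem_setOf_eq] at ha hb ⊢
    simp [Pi.add_apply, add_mul, Finset.sum_add_distrib, ha y hy, hb y hy]
  smul_mem' := by
    intro c a ha y hy
    simp only [Set.mem_setOf_eq] at ha ⊢
    simp [Pi.smul_apply, smul_eq_mul, mul_assoc, ← Finset.mul_sum, ha y hy]

/-- The code generated by the block matrix `(I | M)`: the row space
`{(x, Mᵀx) : x ∈ K^ι}` inside `K^(ι ⊕ ι)`. -/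
def genCode {K : Type*} [CommRing K] {ι : Type*} [Fintype ι]
    (M : Matrix ι ι K) : Submodule K (ι ⊕ ι → K) where
  carrier := {v | ∃ x : ι → K, v = Sum.elim x (Matrix.mulVec (Matrix.transpose M) x)}
  zero_mem' := ⟨0, by funext s; cases s <;> simp [Matrix.mulVec_zero]⟩
  add_mem' := by
    rintro a b ⟨x, rfl⟩ ⟨y, rfl⟩
    exact ⟨x + y, by funext s; cases s <;> simp [Matrix.mulVec_add]⟩
  smul_mem' := by
    rintro c a ⟨x, rfl⟩
    exact ⟨c • x, by funext s; cases s <;> simp [Matrix.mulVec_smul]⟩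

/-- The Gray map `(F₂ + uF₂)ⁿ → F₂^{2n}` sending `a + bu ↦ (b, a + b)`
coordinatewise, where `F₂ + uF₂` is realized as the dual numbers over `ZMod 2`
(so `a = fst`, `b = snd`). -/
def grayMap {n : ℕ} (x : Fin n → DualNumber (ZMod 2)) : (Fin n ⊕ Fin n) → ZMod 2 :=
  Sum.elim (fun i => TrivSqZeroExt.snd (x i))
    (fun i => TrivSqZeroExt.fst (x i) + TrivSqZeroExt.snd (x i))

/-! The Gray map is an `𝔽₂`-linear bijection, and for `x, y ∈ Rⁿ` with `r = x ⬝ᵥ y` one has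
`φ x ⬝ᵥ φ y = fst r + snd r` and `φ x ⬝ᵥ φ (ε • y) = fst r` (characteristic 2 kills the cross
term). A code `C` is closed under multiplication by `ε`, so `φ z` is orthogonal to `φ(C)` iff
`z ⬝ᵥ y = 0` for all `y ∈ C`; that is, `φ(C)⊥ = φ(C⊥)`, which equals `φ(C)` when `C` is self-dual. -/

open TrivSqZeroExt
open scoped DualNumber

namespace DualNumber

theorem fst_mul_add_snd_mul {K : Type*} [CommRing K] [CharP K 2] (x y : K[ε]) :
    fst (x * y) + snd (x * y) = snd x * snd y + (fst x + snd x) * (fst y + snd y) := by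
  rw [fst_mul, DualNumber.snd_mul]
  linear_combination (-(snd x * snd y)) * CharTwo.two_eq_zero (R := K)

end DualNumber

theorem mem_dualCode {K ι : Type*} [CommRing K] [Fintype ι] {C : Submodule K (ι → K)}
    {x : ι → K} : x ∈ dualCode C ↔ ∀ y ∈ C, x ⬝ᵥ y = 0 := Iff.rfl

def grayEquiv (n : ℕ) : (Fin n → DualNumber (ZMod 2)) ≃ₗ[ZMod 2] (Fin n ⊕ Fin n → ZMod 2) where
  toFun := grayMap
  invFun w i := inl (w (Sum.inr i) - w (Sum.inl i)) + inr (w (Sum.inl i))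
  map_add' x y := by ext (i | i) <;> simp [grayMap]; abel
  map_smul' c x := by ext (i | i) <;> simp [grayMap, mul_add]
  left_inv x := by ext i <;> simp [grayMap]
  right_inv w := by ext (i | i) <;> simp [grayMap]

section

variable {n : ℕ}

theorem grayEquiv_apply (x : Fin n → DualNumber (ZMod 2)) : grayEquiv n x = grayMap x := rfl

theorem grayMap_dotProduct (x y : Fin n → DualNumber (ZMod 2)) :
    grayMap x ⬝ᵥ grayMap y = fst (x ⬝ᵥ y) + snd (x ⬝ᵥ y) := by
  simp only [dotProduct, fst_sum, snd_sum, Fintype.sum_sum_type, ← Finset.sum_add_distrib,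
    DualNumber.fst_mul_add_snd_mul]
  rfl

theorem grayMap_dotProduct_eps_smul (x y : Fin n → DualNumber (ZMod 2)) :
    grayMap x ⬝ᵥ grayMap ((ε : DualNumber (ZMod 2)) • y) = fst (x ⬝ᵥ y) := by
  rw [grayMap_dotProduct, dotProduct_smul, smul_eq_mul]
  simp

theorem dotProduct_eq_zero_iff_grayMap (x y : Fin n → DualNumber (ZMod 2)) :
    x ⬝ᵥ y = 0 ↔
      grayMap x ⬝ᵥ grayMap y = 0 ∧ grayMap x ⬝ᵥ grayMap ((ε : DualNumber (ZMod 2)) • y) = 0 := by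
  rw [grayMap_dotProduct, grayMap_dotProduct_eps_smul, TrivSqZeroExt.ext_iff, fst_zero, snd_zero]
  constructor
  · rintro ⟨h₁, h₂⟩
    simp [h₁, h₂]
  · rintro ⟨h₁, h₂⟩
    simpa [h₂] using h₁

theorem dualCode_map_grayEquiv (C : Submodule (DualNumber (ZMod 2)) (Fin n → DualNumber (ZMod 2))) :
    dualCode ((C.restrictScalars (ZMod 2)).map (grayEquiv n).toLinearMap) =
      ((dualCode C).restrictScalars (ZMod 2)).map (grayEquiv n).toLinearMap := by
  ext w
  obtain ⟨z, rfl⟩ := (grayEquiv n).surjective w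
  rw [Submodule.mem_map_equiv, LinearEquiv.symm_apply_apply, Submodule.restrictScalars_mem]
  simp only [mem_dualCode, Submodule.mem_map, Submodule.restrictScalars_mem, forall_exists_index,
    and_imp, forall_apply_eq_imp_iff₂, LinearEquiv.coe_coe, grayEquiv_apply]
  constructor
  · intro h y hy
    exact (dotProduct_eq_zero_iff_grayMap z y).2 ⟨h y hy, h _ (C.smul_mem ε hy)⟩
  · intro h y hy
    exact ((dotProduct_eq_zero_iff_grayMap z y).1 (h y hy)).1

end

/-- the Gray image of a self-dual code over `F₂ + uF₂` of length `n`
is a self-dual binary code of length `2n`. -/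
theorem grayMap_selfDual {n : ℕ}
    (C : Submodule (DualNumber (ZMod 2)) (Fin n → DualNumber (ZMod 2)))
    (hsd : C = dualCode C) :
    ∃ D : Submodule (ZMod 2) ((Fin n ⊕ Fin n) → ZMod 2),
      (D : Set ((Fin n ⊕ Fin n) → ZMod 2)) = grayMap '' (C : Set _) ∧
      D = dualCode D := by
  refine ⟨(C.restrictScalars (ZMod 2)).map (grayEquiv n).toLinearMap, ?_, ?_⟩
  · rw [Submodule.map_coe, Submodule.coe_restrictScalars]
    rfl
  · rw [dualCode_map_grayEquiv, ← hsd]
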